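/- arXiv:2110.04227 — 5 statements merged into one kernel-verified Lean document; each statement's English description precedes it below -/
import Mathlib

section
/- Let K ⊆ ℝⁿ, X ⊆ ℝᵖ and W ⊆ ℝᵒ be compact sets with K and X nonempty, let f ∈ emb(K,W) (i.e., f ∈ emb(K,ℝᵒ) with f(K) ⊆ W), let h ∈ emb(X,W), and let g ∈ emb(W,ℝᵐ) be Lipschitz on W with Lipschitz constant L. Then B_{K,X}(g∘f, g∘h) ≤ L · B_{K,X}(f,h), where B_{K,X}(f,h) is the embedding gap between f and h as maps into ℝᵒ and B_{K,X}(g∘f, g∘h) is the embedding gap between g∘f and g∘h as maps into ℝᵐ. -/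
open Set Function Filter MeasureTheory Topology
open scoped ENNReal NNReal

noncomputable section

abbrev Euc (n : ℕ) := EuclideanSpace ℝ (Fin n)

/-- `f` is a topological embedding of `A` into `B`: continuous and injective on `A`,
maps `A` into `B`, and its inverse is continuous on `f '' A`. -/
def IsEmbOn {α β : Type*} [TopologicalSpace α] [TopologicalSpace β] [Nonempty α]
    (f : α → β) (A : Set α) (B : Set β) : Prop :=
  ContinuousOn f A ∧ A.InjOn f ∧ f '' A ⊆ B ∧
    ContinuousOn (Function.invFunOn f A) (f '' A)

/-- The embedding gap `B_{K,W}(f,g)`. -/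
def embGap {n o m : ℕ} (f : Euc n → Euc m) (g : Euc o → Euc m)
    (K : Set (Euc n)) (W : Set (Euc o)) : ℝ≥0∞ :=
  ⨅ (r : Euc m → Euc m) (_ : IsEmbOn r (f '' K) (g '' W)),
    ⨆ y ∈ f '' K, edist y (r y)

/-- The `(m,n,o)` manifold embedding property of `𝓔` w.r.t. `𝓕`. -/
def HasMEP {o n m : ℕ} (𝓔 : Set (Euc o → Euc m)) (𝓕 : Set (Euc n → Euc m)) : Prop :=
  ∀ K : Set (Euc n), K.Nonempty → IsCompact K → ∀ f ∈ 𝓕, ∀ ε : ℝ, 0 < ε →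
    ∃ E ∈ 𝓔, ∃ W : Set (Euc o), IsCompact W ∧ embGap f E K W < ENNReal.ofReal ε

/-- Composition of two families of functions. -/
def compFam {α β γ : Type*} (H : Set (β → γ)) (G : Set (α → β)) : Set (α → γ) :=
  {e | ∃ h ∈ H, ∃ g ∈ G, e = h ∘ g}

/-- The Wasserstein-2 distance with `ℓ²` ground metric. -/
def W2 {d : ℕ} (μ ν : Measure (Euc d)) : ℝ≥0∞ :=
  ⨅ (π : Measure (Euc d × Euc d)) (_ : IsProbabilityMeasure π)
    (_ : π.map Prod.fst = μ) (_ : π.map Prod.snd = ν),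
    (∫⁻ p, edist p.1 p.2 ^ 2 ∂π) ^ (1 / 2 : ℝ)

/-- Distributional universality of a family of maps on `ℝⁿ`. -/
def DistUniv {n : ℕ} (𝓣 : Set (Euc n → Euc n)) : Prop :=
  ∀ μ' ν : Measure (Euc n), IsProbabilityMeasure μ' → IsProbabilityMeasure ν →
    μ' ≪ volume →
    ∃ T : ℕ → (Euc n → Euc n), (∀ i, T i ∈ 𝓣) ∧
      ∀ φ : BoundedContinuousFunction (Euc n) ℝ,
        Tendsto (fun i => ∫ x, φ x ∂(μ'.map (T i))) atTop (𝓝 (∫ x, φ x ∂ν))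

theorem embGap_comp_lipschitz_le {n p o m : ℕ}
    (K : Set (Euc n)) (X : Set (Euc p)) (W : Set (Euc o))
    (hKc : IsCompact K) (hXc : IsCompact X) (hWc : IsCompact W)
    (hKne : K.Nonempty) (hXne : X.Nonempty)
    (f : Euc n → Euc o) (h : Euc p → Euc o) (g : Euc o → Euc m) (L : ℝ≥0)
    (hf : IsEmbOn f K W) (hh : IsEmbOn h X W)
    (hg : IsEmbOn g W Set.univ) (hgL : LipschitzOnWith L g W) :
    embGap (g ∘ f) (g ∘ h) K X ≤ (L : ℝ≥0∞) * embGap f h K X := by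
  classical
  obtain ⟨hfc, hfinj, hfim, hfinv⟩ := hf
  obtain ⟨hhc, hhinj, hhim, hhinv⟩ := hh
  obtain ⟨hgc, hginj, hgim, hginv⟩ := hg
  rcases eq_or_ne L 0 with hL | hL
  · -- degenerate case: g is constant on W
    subst hL
    obtain ⟨z₀, hz₀⟩ := hXne
    have hconst : ∀ a ∈ W, ∀ b ∈ W, g a = g b := by
      intro a ha b hb
      have := hgL ha hb
      simpa [edist_eq_zero] using this
    have hSsub : (g ∘ f) '' K ⊆ (g ∘ h) '' X := by
      rintro z ⟨x, hx, rfl⟩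
      exact ⟨z₀, hz₀, (hconst (h z₀) (hhim ⟨z₀, hz₀, rfl⟩) (f x) (hfim ⟨x, hx, rfl⟩))⟩
    have hemb : IsEmbOn (id : Euc m → Euc m) ((g ∘ f) '' K) ((g ∘ h) '' X) := by
      refine ⟨continuousOn_id, injective_id.injOn, ?_, ?_⟩
      · rw [image_id]; exact hSsub
      · rw [image_id]
        refine continuousOn_id.congr ?_
        intro z hz
        simpa using injective_id.injOn.leftInvOn_invFunOn hz
    have hle : embGap (g ∘ f) (g ∘ h) K X ≤
        ⨆ y ∈ (g ∘ f) '' K, edist y ((id : Euc m → Euc m) y) := by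
      rw [embGap]; exact iInf₂_le (id : Euc m → Euc m) hemb
    have h0 : (⨆ y ∈ (g ∘ f) '' K, edist y ((id : Euc m → Euc m) y)) = 0 := by simp
    rw [h0] at hle
    exact le_trans hle zero_le
  · -- main case
    have key : ∀ r : Euc o → Euc o, IsEmbOn r (f '' K) (h '' X) →
        embGap (g ∘ f) (g ∘ h) K X ≤ (L : ℝ≥0∞) * ⨆ y ∈ f '' K, edist y (r y) := by
      intro r hr
      obtain ⟨hrc, hrinj, hrim, hrinv⟩ := hr
      set q := Function.invFunOn g W with hqdef
      set r' := g ∘ r ∘ q with hr'def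
      have hqg : ∀ a ∈ W, q (g a) = a := fun a ha => hginj.leftInvOn_invFunOn ha
      have hrW : ∀ y ∈ f '' K, r y ∈ W := fun y hy => hhim (hrim ⟨y, hy, rfl⟩)
      have hr'eq : ∀ y ∈ f '' K, r' (g y) = g (r y) := by
        intro y hy
        simp only [hr'def, comp_apply, hqg y (hfim hy)]
      have hSeq : (g ∘ f) '' K = g '' (f '' K) := by rw [image_comp]
      have hSgW : (g ∘ f) '' K ⊆ g '' W := hSeq ▸ image_mono (f := g) hfim
      -- q maps (g∘f)''K into f''K
      have hqmap : MapsTo q ((g ∘ f) '' K) (f '' K) := by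
        rintro z ⟨x, hx, rfl⟩
        have : q (g (f x)) = f x := hqg (f x) (hfim ⟨x, hx, rfl⟩)
        simpa [comp_apply, this] using (⟨x, hx, rfl⟩ : f x ∈ f '' K)
      have hr'emb : IsEmbOn r' ((g ∘ f) '' K) ((g ∘ h) '' X) := by
        refine ⟨?_, ?_, ?_, ?_⟩
        · -- continuity
          have c1 : ContinuousOn (r ∘ q) ((g ∘ f) '' K) :=
            hrc.comp (hginv.mono hSgW) hqmap
          exact hgc.comp c1 (fun z hz => hrW _ (hqmap hz))
        · -- injectivity
          rintro z₁ ⟨x₁, hx₁, rfl⟩ z₂ ⟨x₂, hx₂, rfl⟩ heq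
          have h₁ : (f x₁) ∈ f '' K := ⟨x₁, hx₁, rfl⟩
          have h₂ : (f x₂) ∈ f '' K := ⟨x₂, hx₂, rfl⟩
          have e1 : r' (g (f x₁)) = g (r (f x₁)) := hr'eq _ h₁
          have e2 : r' (g (f x₂)) = g (r (f x₂)) := hr'eq _ h₂
          have : g (r (f x₁)) = g (r (f x₂)) := by
            rw [← e1, ← e2]; exact heq
          have hrr : r (f x₁) = r (f x₂) := hginj (hrW _ h₁) (hrW _ h₂) this
          have : f x₁ = f x₂ := hrinj h₁ h₂ hrr
          simp [comp_apply, this]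
        · -- image inclusion
          rintro z ⟨w, ⟨x, hx, rfl⟩, rfl⟩
          have hy : (f x) ∈ f '' K := ⟨x, hx, rfl⟩
          have e : r' (g (f x)) = g (r (f x)) := hr'eq _ hy
          simp only [comp_apply]
          rw [e]
          obtain ⟨w', hw', hw'eq⟩ := hrim ⟨f x, hy, rfl⟩
          exact ⟨w', hw', by show g (h w') = g (r (f x)); rw [hw'eq]⟩
        · -- inverse continuity
          set S := (g ∘ f) '' K with hSdef
          set ψ := g ∘ Function.invFunOn r (f '' K) ∘ q with hψdef
          have hT : r' '' S ⊆ g '' (r '' (f '' K)) := by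
            rintro z ⟨s, ⟨x, hx, rfl⟩, rfl⟩
            have hy : (f x) ∈ f '' K := ⟨x, hx, rfl⟩
            exact ⟨r (f x), ⟨f x, hy, rfl⟩, (hr'eq _ hy).symm⟩
          have hTgW : r' '' S ⊆ g '' W := hT.trans (image_mono (f := g) (hrim.trans hhim))
          have hqT : MapsTo q (r' '' S) (r '' (f '' K)) := by
            intro z hz
            obtain ⟨u, hu, rfl⟩ := hT hz
            have : q (g u) = u := hqg u (hhim (hrim hu))
            rw [this]; exact hu
          have hinvmap : MapsTo (Function.invFunOn r (f '' K)) (r '' (f '' K)) (f '' K) := by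
            rintro u ⟨y, hy, rfl⟩
            rw [hrinj.leftInvOn_invFunOn hy]; exact hy
          have hψc : ContinuousOn ψ (r' '' S) := by
            have c1 : ContinuousOn (Function.invFunOn r (f '' K) ∘ q) (r' '' S) :=
              hrinv.comp (hginv.mono hTgW) hqT
            exact hgc.comp c1 (fun z hz => hfim (hinvmap (hqT hz)))
          refine hψc.congr ?_
          rintro z ⟨s, hs, rfl⟩
          obtain ⟨x, hx, rfl⟩ := hs
          have hy : (f x) ∈ f '' K := ⟨x, hx, rfl⟩
          have hs' : (g ∘ f) x ∈ S := ⟨x, hx, rfl⟩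
          have hinjS : S.InjOn r' := by
            rintro z₁ ⟨x₁, hx₁, rfl⟩ z₂ ⟨x₂, hx₂, rfl⟩ heq
            have h₁ : (f x₁) ∈ f '' K := ⟨x₁, hx₁, rfl⟩
            have h₂ : (f x₂) ∈ f '' K := ⟨x₂, hx₂, rfl⟩
            have e1 : r' (g (f x₁)) = g (r (f x₁)) := hr'eq _ h₁
            have e2 : r' (g (f x₂)) = g (r (f x₂)) := hr'eq _ h₂
            have : g (r (f x₁)) = g (r (f x₂)) := by rw [← e1, ← e2]; exact heq
            have hrr : r (f x₁) = r (f x₂) := hginj (hrW _ h₁) (hrW _ h₂) this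
            have : f x₁ = f x₂ := hrinj h₁ h₂ hrr
            simp [comp_apply, this]
          have lhs : Function.invFunOn r' S (r' ((g ∘ f) x)) = (g ∘ f) x :=
            hinjS.leftInvOn_invFunOn hs'
          rw [lhs]
          -- compute ψ (r' ((g∘f) x))
          have e1 : r' ((g ∘ f) x) = g (r (f x)) := hr'eq _ hy
          rw [e1]
          have e2 : q (g (r (f x))) = r (f x) := hqg _ (hhim (hrim ⟨f x, hy, rfl⟩))
          have e3 : Function.invFunOn r (f '' K) (r (f x)) = f x :=
            hrinj.leftInvOn_invFunOn hy
          simp only [hψdef, comp_apply, e2, e3]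
      -- the sup bound
      have hsup : (⨆ z ∈ (g ∘ f) '' K, edist z (r' z)) ≤
          (L : ℝ≥0∞) * ⨆ y ∈ f '' K, edist y (r y) := by
        refine iSup₂_le ?_
        rintro z ⟨x, hx, rfl⟩
        have hy : (f x) ∈ f '' K := ⟨x, hx, rfl⟩
        have e : r' (g (f x)) = g (r (f x)) := hr'eq _ hy
        simp only [comp_apply]
        rw [e]
        calc edist (g (f x)) (g (r (f x)))
            ≤ (L : ℝ≥0∞) * edist (f x) (r (f x)) := hgL (hfim hy) (hrW _ hy)
          _ ≤ (L : ℝ≥0∞) * ⨆ y ∈ f '' K, edist y (r y) :=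
              mul_le_mul_right (le_iSup₂ (f := fun y _ => edist y (r y)) (f x) hy) _
      rw [embGap]; exact le_trans (iInf₂_le r' hr'emb) hsup
    -- combine
    have hL0 : (L : ℝ≥0∞) ≠ 0 := by exact_mod_cast hL
    have hrhs : (L : ℝ≥0∞) * embGap f h K X =
        ⨅ (r : Euc o → Euc o), ⨅ (_ : IsEmbOn r (f '' K) (h '' X)),
          (L : ℝ≥0∞) * ⨆ y ∈ f '' K, edist y (r y) := by
      rw [embGap, ENNReal.mul_iInf_of_ne hL0 ENNReal.coe_ne_top]
      refine iInf_congr fun r => ?_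
      rw [ENNReal.mul_iInf_of_ne hL0 ENNReal.coe_ne_top]
    rw [hrhs]
    exact le_iInf₂ key
end
end

section
/- Let K ⊆ ℝⁿ be nonempty and compact, W ⊆ ℝᵒ be compact, f ∈ emb(K,ℝᵐ) and g ∈ emb(W,ℝᵐ). Then for every r ∈ emb(f(K),ℝᵐ), one has B_{K,W}(f,g) ≤ sup_{y ∈ f(K)} ‖y − r(y)‖₂ + B_{K,W}(r∘f, g). -/
/-! Every embedding `s` of `r(f(K))` into `g(W)` yields the embedding `s ∘ r` of `f(K)` into
`g(W)`, and the triangle inequality through `r y` bounds its displacement at `y` by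
`‖y - r y‖ + ‖r y - s (r y)‖`. -/

open Set Function Filter MeasureTheory Topology
open scoped ENNReal NNReal

noncomputable section

theorem invFunOn_comp_eqOn {α β γ : Type*} [Nonempty α] [Nonempty β] {r : α → β} {s : β → γ}
    {A : Set α} (hr : A.InjOn r) (hs : (r '' A).InjOn s) :
    EqOn (invFunOn (s ∘ r) A) (invFunOn r A ∘ invFunOn s (r '' A)) ((s ∘ r) '' A) := by
  rintro _ ⟨y, hy, rfl⟩
  rw [(hs.comp hr (mapsTo_image r A)).leftInvOn_invFunOn hy, comp_apply, comp_apply,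
    hs.leftInvOn_invFunOn (mem_image_of_mem r hy), hr.leftInvOn_invFunOn hy]

theorem IsEmbOn.comp {α β γ : Type*} [TopologicalSpace α] [TopologicalSpace β]
    [TopologicalSpace γ] [Nonempty α] [Nonempty β] {r : α → β} {s : β → γ} {A : Set α}
    {B : Set β} {C : Set γ} (hs : IsEmbOn s (r '' A) C) (hr : IsEmbOn r A B) :
    IsEmbOn (s ∘ r) A C := by
  obtain ⟨hsc, hsi, hsC, hsinv⟩ := hs
  obtain ⟨hrc, hri, -, hrinv⟩ := hr
  refine ⟨hsc.comp hrc (mapsTo_image r A), hsi.comp hri (mapsTo_image r A),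
    image_comp s r A ▸ hsC, ?_⟩
  refine ContinuousOn.congr ?_ (invFunOn_comp_eqOn hri hsi)
  rw [image_comp]
  exact hrinv.comp hsinv fun _ hz => invFunOn_mem hz

theorem iSup_edist_comp_le {α : Type*} [PseudoEMetricSpace α] (r s : α → α) (A : Set α) :
    ⨆ y ∈ A, edist y (s (r y)) ≤
      (⨆ y ∈ A, edist y (r y)) + ⨆ z ∈ r '' A, edist z (s z) := by
  rw [iSup_image]
  refine iSup₂_le fun y hy => (edist_triangle y (r y) (s (r y))).trans ?_
  gcongr
  · exact le_iSup₂ (f := fun y (_ : y ∈ A) => edist y (r y)) y hy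
  · exact le_iSup₂ (f := fun y (_ : y ∈ A) => edist (r y) (s (r y))) y hy

theorem embGap_le_add_general {n o m : ℕ} (K : Set (Euc n)) (W : Set (Euc o))
    (f : Euc n → Euc m) (g : Euc o → Euc m)
    (r : Euc m → Euc m) (hr : IsEmbOn r (f '' K) Set.univ) :
    embGap f g K W ≤ (⨆ y ∈ f '' K, edist y (r y)) + embGap (r ∘ f) g K W := by
  simp only [embGap, ENNReal.add_iInf, image_comp]
  exact le_iInf₂ fun s hs =>
    (iInf₂_le (s ∘ r) (hs.comp hr)).trans (iSup_edist_comp_le r s _)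

theorem embGap_le_add {n o m : ℕ} (K : Set (Euc n)) (W : Set (Euc o))
    (hKne : K.Nonempty) (hKc : IsCompact K) (hWc : IsCompact W)
    (f : Euc n → Euc m) (g : Euc o → Euc m)
    (hf : IsEmbOn f K Set.univ) (hg : IsEmbOn g W Set.univ)
    (r : Euc m → Euc m) (hr : IsEmbOn r (f '' K) Set.univ) :
    embGap f g K W ≤ (⨆ y ∈ f '' K, edist y (r y)) + embGap (r ∘ f) g K W :=
  embGap_le_add_general K W f g r hr
end
end

section
/- Let K ⊆ ℝⁿ be nonempty and compact, let W ⊆ ℝᵒ be compact and contain the closure of a set U that is nonempty and open in the subspace topology of some p-dimensional linear subspace V ⊆ ℝᵒ with n ≤ p ≤ o, let f ∈ emb(K,ℝᵐ) and g ∈ emb(W,ℝᵐ). Then for every Borel probability measure μ on ℝⁿ supported in K, there exists a Borel probability measure μ_o on ℝᵒ supported in W such that W₂(f_#μ, g_#μ_o) ≤ B_{K,W}(f,g). -/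
open Set Function Filter MeasureTheory Topology
open scoped ENNReal NNReal

noncomputable section

section NearestSelection

open Metric

/-- The least element of a measurably-varying set of naturals is a measurable function. -/
lemma measurable_sInf_nat {α : Type*} [MeasurableSpace α] {E : α → Set ℕ}
    (h : ∀ i, MeasurableSet {y | i ∈ E y}) :
    Measurable fun y => sInf (E y) := by
  apply measurable_to_countable'
  intro i
  have heq : (fun y => sInf (E y)) ⁻¹' {i} =
      ({y | i ∈ E y} ∩ ⋂ j, ⋂ (_ : j < i), {y | j ∈ E y}ᶜ) ∪
        ({y : α | i = 0} ∩ ⋂ j, {y | j ∈ E y}ᶜ) := by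
    ext y
    simp only [Set.mem_preimage, Set.mem_singleton_iff, Set.mem_union, Set.mem_inter_iff,
      Set.mem_iInter, Set.mem_compl_iff, Set.mem_setOf_eq]
    constructor
    · rintro rfl
      by_cases hE : (E y).Nonempty
      · exact Or.inl ⟨Nat.sInf_mem hE, fun j hj => Nat.notMem_of_lt_sInf hj⟩
      · rw [Set.not_nonempty_iff_eq_empty] at hE
        exact Or.inr ⟨by simp [hE], fun j => by simp [hE]⟩
    · rintro (⟨hi, hlt⟩ | ⟨h0, hall⟩)
      · refine le_antisymm (Nat.sInf_le hi) ?_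
        by_contra hcon
        push_neg at hcon
        exact hlt _ hcon (Nat.sInf_mem ⟨i, hi⟩)
      · have hE : E y = ∅ := Set.eq_empty_iff_forall_notMem.2 hall
        simp [hE, h0]
  rw [heq]
  exact ((h i).inter (MeasurableSet.iInter fun j =>
      MeasurableSet.iInter fun _ => (h j).compl)).union
    ((MeasurableSet.const _).inter (MeasurableSet.iInter fun j => (h j).compl))

variable {m : ℕ} (F : Set (Euc m)) (z : ℕ → Euc m)

/-- Recursive choice of indices of approximate nearest points in ever smaller balls. -/
noncomputable def selIdx : ℕ → Euc m → ℕ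
  | k, y =>
    sInf {i | ((F ∩ ⋂ j : Fin k, closedBall (z (selIdx j y)) ((2:ℝ)⁻¹ ^ (j:ℕ))) ∩
          closedBall (z i) ((2:ℝ)⁻¹ ^ k)).Nonempty ∧
        infDist y ((F ∩ ⋂ j : Fin k, closedBall (z (selIdx j y)) ((2:ℝ)⁻¹ ^ (j:ℕ))) ∩
          closedBall (z i) ((2:ℝ)⁻¹ ^ k)) = infDist y F}
  termination_by k => k
  decreasing_by all_goals exact j.2

/-- The nested constraint sets. -/
def selSet (k : ℕ) (y : Euc m) : Set (Euc m) :=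
  F ∩ ⋂ j : Fin k, closedBall (z (selIdx F z j y)) ((2:ℝ)⁻¹ ^ (j:ℕ))

/-- The set of admissible indices at stage `k`. -/
def selESet (k : ℕ) (y : Euc m) : Set ℕ :=
  {i | (selSet F z k y ∩ closedBall (z i) ((2:ℝ)⁻¹ ^ k)).Nonempty ∧
    infDist y (selSet F z k y ∩ closedBall (z i) ((2:ℝ)⁻¹ ^ k)) = infDist y F}

lemma selIdx_eq (k : ℕ) (y : Euc m) : selIdx F z k y = sInf (selESet F z k y) := by
  rw [selIdx]; rfl

lemma selSet_zero (y : Euc m) : selSet F z 0 y = F := by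
  simp [selSet]

lemma selSet_succ (k : ℕ) (y : Euc m) :
    selSet F z (k + 1) y = selSet F z k y ∩ closedBall (z (selIdx F z k y)) ((2:ℝ)⁻¹ ^ k) := by
  ext x
  simp only [selSet, Set.mem_inter_iff, Set.mem_iInter, Fin.forall_fin_succ',
    Fin.coe_castSucc, Fin.val_last]
  tauto

lemma selSet_subset (k : ℕ) (y : Euc m) : selSet F z k y ⊆ F := Set.inter_subset_left

lemma selSet_succ_subset (k : ℕ) (y : Euc m) : selSet F z (k + 1) y ⊆ selSet F z k y := by
  rw [selSet_succ]; exact Set.inter_subset_left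

lemma selSet_subset_ball (k : ℕ) (y : Euc m) :
    selSet F z (k + 1) y ⊆ closedBall (z (selIdx F z k y)) ((2:ℝ)⁻¹ ^ k) := by
  rw [selSet_succ]; exact Set.inter_subset_right

lemma selSet_compact (hF : IsCompact F) (k : ℕ) (y : Euc m) : IsCompact (selSet F z k y) :=
  hF.inter_right (isClosed_iInter fun _ => isClosed_closedBall)

lemma selSet_inv (hF : IsCompact F) (hne : F.Nonempty)
    (hz : ∀ w ∈ F, ∀ ε : ℝ, 0 < ε → ∃ i, dist w (z i) < ε) :
    ∀ k y, ∃ w ∈ selSet F z k y, dist y w = infDist y F := by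
  intro k
  induction k with
  | zero =>
    intro y
    obtain ⟨w, hwF, hw⟩ := hF.exists_infDist_eq_dist hne y
    exact ⟨w, by simpa [selSet_zero] using hwF, hw.symm⟩
  | succ k ih =>
    intro y
    obtain ⟨w, hwS, hwd⟩ := ih y
    obtain ⟨i₀, hi₀⟩ := hz w (selSet_subset F z k y hwS) ((2:ℝ)⁻¹ ^ k) (by positivity)
    have hwB : w ∈ selSet F z k y ∩ closedBall (z i₀) ((2:ℝ)⁻¹ ^ k) :=
      ⟨hwS, mem_closedBall.2 hi₀.le⟩
    have hsub : selSet F z k y ∩ closedBall (z i₀) ((2:ℝ)⁻¹ ^ k) ⊆ F :=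
      Set.inter_subset_left.trans (selSet_subset F z k y)
    have hmem : i₀ ∈ selESet F z k y := by
      refine ⟨⟨w, hwB⟩, le_antisymm ((infDist_le_dist_of_mem hwB).trans hwd.le)
        (infDist_le_infDist_of_subset hsub ⟨w, hwB⟩)⟩
    have hsel : selIdx F z k y ∈ selESet F z k y := by
      rw [selIdx_eq]; exact Nat.sInf_mem ⟨i₀, hmem⟩
    obtain ⟨hne', hinf⟩ := hsel
    have hc : IsCompact (selSet F z k y ∩ closedBall (z (selIdx F z k y)) ((2:ℝ)⁻¹ ^ k)) :=
      (selSet_compact F z hF k y).inter_right isClosed_closedBall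
    obtain ⟨w', hw'm, hw'⟩ := hc.exists_infDist_eq_dist hne' y
    refine ⟨w', ?_, by rw [← hw', hinf]⟩
    rw [selSet_succ]; exact hw'm

lemma measurable_selIdx (k : ℕ) : Measurable (selIdx F z k) := by
  induction k using Nat.strong_induction_on with
  | _ k ih =>
  have hrw : selIdx F z k = fun y => sInf (selESet F z k y) := funext (selIdx_eq F z k)
  rw [hrw]
  apply measurable_sInf_nat
  intro i
  have heq : {y | i ∈ selESet F z k y} =
      ⋃ v : Fin k → ℕ, ((⋂ j : Fin k, {y | selIdx F z (j : ℕ) y = v j}) ∩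
        {y | ((F ∩ ⋂ j : Fin k, closedBall (z (v j)) ((2:ℝ)⁻¹ ^ (j:ℕ))) ∩
            closedBall (z i) ((2:ℝ)⁻¹ ^ k)).Nonempty ∧
          infDist y ((F ∩ ⋂ j : Fin k, closedBall (z (v j)) ((2:ℝ)⁻¹ ^ (j:ℕ))) ∩
            closedBall (z i) ((2:ℝ)⁻¹ ^ k)) = infDist y F}) := by
    ext y
    simp only [Set.mem_setOf_eq, Set.mem_iUnion, Set.mem_inter_iff, Set.mem_iInter]
    constructor
    · intro hy
      exact ⟨fun j => selIdx F z (j : ℕ) y, fun j => rfl, hy⟩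
    · rintro ⟨v, hv, hy⟩
      have hSv : selSet F z k y =
          F ∩ ⋂ j : Fin k, closedBall (z (v j)) ((2:ℝ)⁻¹ ^ (j:ℕ)) := by
        unfold selSet
        congr 1
        exact Set.iInter_congr fun j => by rw [hv j]
      show i ∈ selESet F z k y
      unfold selESet
      rw [Set.mem_setOf_eq, hSv]
      exact hy
  rw [heq]
  refine MeasurableSet.iUnion fun v => (MeasurableSet.iInter fun j => ?_).inter ?_
  · exact (ih (j : ℕ) j.2) (measurableSet_singleton (v j))
  · rw [Set.setOf_and]
    refine (MeasurableSet.const _).inter ?_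
    exact (isClosed_eq (continuous_infDist_pt _) (continuous_infDist_pt _)).measurableSet

/-- Measurable selection of a nearest point in a nonempty compact subset of `Euc m`. -/
theorem exists_measurable_nearest {m : ℕ} (F : Set (Euc m)) (hF : IsCompact F)
    (hne : F.Nonempty) :
    ∃ T : Euc m → Euc m, Measurable T ∧ ∀ y, T y ∈ F ∧ dist y (T y) = infDist y F := by
  haveI : Nonempty F := hne.to_subtype
  obtain ⟨u, hu⟩ := TopologicalSpace.exists_dense_seq F
  set z : ℕ → Euc m := fun i => (u i : Euc m) with hzdef
  have hz : ∀ w ∈ F, ∀ ε : ℝ, 0 < ε → ∃ i, dist w (z i) < ε := by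
    intro w hw ε hε
    obtain ⟨i, hi⟩ := hu.exists_dist_lt (⟨w, hw⟩ : F) hε
    exact ⟨i, by simpa [hzdef, Subtype.dist_eq] using hi⟩
  set c : ℕ → Euc m → Euc m := fun k y => z (selIdx F z k y) with hcdef
  have hcauchy : ∀ y, CauchySeq fun k => c k y := by
    intro y
    apply cauchySeq_of_le_geometric (2:ℝ)⁻¹ 2 (by norm_num)
    intro k
    obtain ⟨w, hwS, -⟩ := selSet_inv F z hF hne hz (k + 2) y
    have h1 : w ∈ closedBall (z (selIdx F z k y)) ((2:ℝ)⁻¹ ^ k) :=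
      selSet_subset_ball F z k y (selSet_succ_subset F z (k + 1) y hwS)
    have h2 : w ∈ closedBall (z (selIdx F z (k + 1) y)) ((2:ℝ)⁻¹ ^ (k + 1)) :=
      selSet_subset_ball F z (k + 1) y hwS
    have hx : (0:ℝ) ≤ (2:ℝ)⁻¹ ^ k := by positivity
    calc dist (c k y) (c (k + 1) y)
        ≤ dist (c k y) w + dist w (c (k + 1) y) := dist_triangle _ _ _
      _ ≤ (2:ℝ)⁻¹ ^ k + (2:ℝ)⁻¹ ^ (k + 1) := by
          refine add_le_add ?_ (mem_closedBall.1 h2)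
          rw [dist_comm]
          exact mem_closedBall.1 h1
      _ ≤ 2 * (2:ℝ)⁻¹ ^ k := by rw [pow_succ]; linarith
  choose L hL using fun y => cauchySeq_tendsto_of_complete (hcauchy y)
  refine ⟨L, ?_, ?_⟩
  · refine measurable_of_tendsto_metrizable (f := fun k y => c k y) (fun k => ?_)
      (tendsto_pi_nhds.2 hL)
    exact (measurable_from_top (f := z)).comp (measurable_selIdx F z k)
  · intro y
    have hw : ∀ k : ℕ, ∃ w ∈ selSet F z (k + 1) y, dist y w = infDist y F :=
      fun k => selSet_inv F z hF hne hz (k + 1) y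
    choose w hwS hwd using hw
    have hdist : ∀ k, dist (w k) (c k y) ≤ (2:ℝ)⁻¹ ^ k :=
      fun k => mem_closedBall.1 (selSet_subset_ball F z k y (hwS k))
    have hwlim : Tendsto w atTop (𝓝 (L y)) := by
      rw [tendsto_iff_dist_tendsto_zero]
      have hb : ∀ k, dist (w k) (L y) ≤ (2:ℝ)⁻¹ ^ k + dist (c k y) (L y) := by
        intro k
        calc dist (w k) (L y) ≤ dist (w k) (c k y) + dist (c k y) (L y) := dist_triangle _ _ _
          _ ≤ (2:ℝ)⁻¹ ^ k + dist (c k y) (L y) := by linarith [hdist k]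
      have h2 : Tendsto (fun k => (2:ℝ)⁻¹ ^ k + dist (c k y) (L y)) atTop (𝓝 0) := by
        have ha := tendsto_pow_atTop_nhds_zero_of_lt_one (by norm_num : (0:ℝ) ≤ 2⁻¹)
          (by norm_num : (2:ℝ)⁻¹ < 1)
        have hb2 := tendsto_iff_dist_tendsto_zero.1 (hL y)
        simpa using ha.add hb2
      exact squeeze_zero (fun k => dist_nonneg) hb h2
    have hclosed : IsClosed {v : Euc m | v ∈ F ∧ dist y v = infDist y F} := by
      rw [Set.setOf_and]
      exact (show IsClosed {v : Euc m | v ∈ F} from hF.isClosed).inter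
        (isClosed_eq (continuous_const.dist continuous_id) continuous_const)
    have hmemN : L y ∈ {v : Euc m | v ∈ F ∧ dist y v = infDist y F} :=
      hclosed.mem_of_tendsto hwlim (Filter.Eventually.of_forall fun k =>
        ⟨selSet_subset F z (k + 1) y (hwS k), hwd k⟩)
    exact ⟨hmemN.1, hmemN.2⟩

end NearestSelection

theorem exists_pushforward_wasserstein_le_embGap {n p o m : ℕ} (hnp : n ≤ p) (hpo : p ≤ o)
    (K : Set (Euc n)) (W : Set (Euc o))
    (hKne : K.Nonempty) (hKc : IsCompact K) (hWc : IsCompact W)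
    (V : Submodule ℝ (Euc o)) (hV : Module.finrank ℝ V = p)
    (U : Set (Euc o)) (hUne : U.Nonempty) (hUV : U ⊆ (V : Set (Euc o)))
    (hUopen : IsOpen (((↑) : V → Euc o) ⁻¹' U))
    (hUW : closure U ⊆ W)
    (f : Euc n → Euc m) (g : Euc o → Euc m)
    (hf : IsEmbOn f K Set.univ) (hg : IsEmbOn g W Set.univ)
    (μ : Measure (Euc n)) (hμ : IsProbabilityMeasure μ) (hμK : μ Kᶜ = 0) :
    ∃ μo : Measure (Euc o), IsProbabilityMeasure μo ∧ μo Wᶜ = 0 ∧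
      W2 (μ.map f) (μo.map g) ≤ embGap f g K W := by
  haveI := hμ
  have hWne : W.Nonempty := hUne.imp fun w hw => hUW (subset_closure hw)
  have hFc : IsCompact (g '' W) := hWc.image_of_continuousOn hg.1
  have hFne : (g '' W).Nonempty := hWne.image g
  obtain ⟨P, hPmeas, hP⟩ := exists_measurable_nearest (g '' W) hFc hFne
  have hKmeas : MeasurableSet K := hKc.measurableSet
  have hWmeas : MeasurableSet W := hWc.measurableSet
  have hFmeas : MeasurableSet (g '' W) := hFc.measurableSet
  have haeK : ∀ᵐ x ∂μ, x ∈ K := by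
    rw [MeasureTheory.ae_iff]
    simpa [Set.compl_def] using hμK
  have hfae : AEMeasurable f μ := by
    have h := hf.1.aemeasurable (μ := μ) hKmeas
    rwa [Measure.restrict_eq_self_of_ae_mem haeK] at h
  have hPf : AEMeasurable (fun x => P (f x)) μ := hPmeas.comp_aemeasurable hfae
  have hPmem : ∀ x, P (f x) ∈ g '' W := fun x => (hP (f x)).1
  set ν := μ.map (fun x => P (f x)) with hνdef
  have hνF : ν ((g '' W)ᶜ) = 0 := by
    rw [hνdef, Measure.map_apply_of_aemeasurable hPf hFmeas.compl]
    have hpre : (fun x => P (f x)) ⁻¹' (g '' W)ᶜ = ∅ := by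
      ext x; simp [hPmem x]
    simp [hpre]
  have hνmem : ∀ᵐ zz ∂ν, zz ∈ g '' W := by
    rw [MeasureTheory.ae_iff]; simpa [Set.compl_def] using hνF
  set s : Euc m → Euc o := Function.invFunOn g W with hsdef
  have hsae : AEMeasurable s ν := by
    have h := hg.2.2.2.aemeasurable (μ := ν) hFmeas
    rwa [Measure.restrict_eq_self_of_ae_mem hνmem] at h
  have hsT : AEMeasurable (fun x => s (P (f x))) μ := hsae.comp_aemeasurable hPf
  have hμoW : (μ.map fun x => s (P (f x))) Wᶜ = 0 := by
    rw [Measure.map_apply_of_aemeasurable hsT hWmeas.compl]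
    have hpre : (fun x => s (P (f x))) ⁻¹' Wᶜ = ∅ := by
      ext x
      obtain ⟨a, ha, hga⟩ := hPmem x
      simp only [Set.mem_preimage, Set.mem_compl_iff, Set.mem_empty_iff_false, iff_false, not_not]
      exact Function.invFunOn_mem ⟨a, ha, hga⟩
    simp [hpre]
  set μo := μ.map (fun x => s (P (f x))) with hμodef
  haveI : IsProbabilityMeasure μo := Measure.isProbabilityMeasure_map hsT
  refine ⟨μo, inferInstance, hμoW, ?_⟩
  have hμomem : ∀ᵐ zz ∂μo, zz ∈ W := by
    rw [MeasureTheory.ae_iff]; simpa [Set.compl_def] using hμoW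
  have hgae : AEMeasurable g μo := by
    have h := hg.1.aemeasurable (μ := μo) hWmeas
    rwa [Measure.restrict_eq_self_of_ae_mem hμomem] at h
  have hmap : μo.map g = ν := by
    rw [hμodef, AEMeasurable.map_map_of_aemeasurable hgae hsT, hνdef]
    congr 1
    funext x
    show g (s (P (f x))) = P (f x)
    obtain ⟨a, ha, hga⟩ := hPmem x
    exact Function.invFunOn_eq ⟨a, ha, hga⟩
  set π : Measure (Euc m × Euc m) := μ.map (fun x => (f x, P (f x))) with hπdef
  have hpair : AEMeasurable (fun x => ((f x, P (f x)) : Euc m × Euc m)) μ := hfae.prodMk hPf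
  haveI hπprob : IsProbabilityMeasure π := Measure.isProbabilityMeasure_map hpair
  have hfst : π.map Prod.fst = μ.map f := by
    rw [hπdef, AEMeasurable.map_map_of_aemeasurable measurable_fst.aemeasurable hpair]
    rfl
  have hsnd : π.map Prod.snd = μo.map g := by
    rw [hmap, hπdef, AEMeasurable.map_map_of_aemeasurable measurable_snd.aemeasurable hpair, hνdef]
    rfl
  have hW2 : W2 (μ.map f) (μo.map g) ≤ (∫⁻ p, edist p.1 p.2 ^ 2 ∂π) ^ (1 / 2 : ℝ) := by
    unfold W2
    exact iInf_le_of_le π (iInf_le_of_le hπprob (iInf_le_of_le hfst (iInf_le_of_le hsnd le_rfl)))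
  refine hW2.trans ?_
  unfold embGap
  refine le_iInf fun r => le_iInf fun hr => ?_
  have hint : ∫⁻ p, edist p.1 p.2 ^ 2 ∂π = ∫⁻ x, edist (f x) (P (f x)) ^ 2 ∂μ := by
    rw [hπdef]
    exact lintegral_map' ((measurable_edist.pow_const 2).aemeasurable) hpair
  have hb : ∀ᵐ x ∂μ, edist (f x) (P (f x)) ^ 2 ≤ (⨆ y ∈ f '' K, edist y (r y)) ^ 2 := by
    filter_upwards [haeK] with x hx
    have hrm : r (f x) ∈ g '' W := hr.2.2.1 (Set.mem_image_of_mem r (Set.mem_image_of_mem f hx))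
    have h1 : dist (f x) (P (f x)) ≤ dist (f x) (r (f x)) := by
      rw [(hP (f x)).2]
      exact Metric.infDist_le_dist_of_mem hrm
    have h2 : edist (f x) (P (f x)) ≤ edist (f x) (r (f x)) := by
      rw [edist_dist, edist_dist]
      exact ENNReal.ofReal_le_ofReal h1
    have h3 : edist (f x) (r (f x)) ≤ ⨆ y ∈ f '' K, edist y (r y) :=
      le_biSup (fun y => edist y (r y)) (Set.mem_image_of_mem f hx)
    exact pow_le_pow_left' (h2.trans h3) 2
  have hle : ∫⁻ x, edist (f x) (P (f x)) ^ 2 ∂μ ≤ (⨆ y ∈ f '' K, edist y (r y)) ^ 2 := by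
    calc ∫⁻ x, edist (f x) (P (f x)) ^ 2 ∂μ
        ≤ ∫⁻ _x, (⨆ y ∈ f '' K, edist y (r y)) ^ 2 ∂μ := lintegral_mono_ae hb
      _ = (⨆ y ∈ f '' K, edist y (r y)) ^ 2 := by simp [lintegral_const, measure_univ]
  calc (∫⁻ p, edist p.1 p.2 ^ 2 ∂π) ^ (1 / 2 : ℝ)
      ≤ ((⨆ y ∈ f '' K, edist y (r y)) ^ 2) ^ (1 / 2 : ℝ) := by
        rw [hint]; exact ENNReal.rpow_le_rpow hle (by norm_num)
    _ = ⨆ y ∈ f '' K, edist y (r y) := by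
        rw [← ENNReal.rpow_natCast _ 2, ← ENNReal.rpow_mul]
        norm_num
end
end

section
/- Let n ≤ o ≤ m. If 𝓡 ⊆ emb(ℝᵒ,ℝᵐ) is a uniform universal approximator of C(ℝᵒ,ℝᵐ), and 𝓣 ⊆ C(ℝᵐ,ℝᵐ) contains the identity map of ℝᵐ, then the family 𝓣∘𝓡 = {T∘R : T ∈ 𝓣, R ∈ 𝓡} has the (m,n,o) manifold embedding property with respect to emb(ℝⁿ,ℝᵐ). -/
open Set Function Filter MeasureTheory Topology
open scoped ENNReal NNReal

noncomputable section

/-- `𝓔` is a uniform universal approximator of `𝓕` on compact sets. -/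
def UnifUnivApprox {a b : ℕ} (𝓔 𝓕 : Set (Euc a → Euc b)) : Prop :=
  ∀ f ∈ 𝓕, ∀ K : Set (Euc a), K.Nonempty → IsCompact K → ∀ ε : ℝ, 0 < ε →
    ∃ E ∈ 𝓔, ∀ x ∈ K, ‖f x - E x‖ < ε

def inclE {n o : ℕ} (h : n ≤ o) : Euc n → Euc o :=
  fun x => WithLp.toLp 2 (fun i => if hi : (i : ℕ) < n then x ⟨i, hi⟩ else 0 : Fin o → ℝ)

def projE {n o : ℕ} (h : n ≤ o) : Euc o → Euc n :=
  fun z => WithLp.toLp 2 (fun j => z (Fin.castLE h j) : Fin n → ℝ)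

lemma projE_inclE {n o : ℕ} (h : n ≤ o) (x : Euc n) : projE h (inclE h x) = x := by
  ext j
  simp [projE, inclE, j.isLt]

lemma inclE_inj {n o : ℕ} (h : n ≤ o) : Function.Injective (inclE h) := by
  intro a b hab
  have := congrArg (projE h) hab
  simpa [projE_inclE] using this

lemma continuous_inclE {n o : ℕ} (h : n ≤ o) : Continuous (inclE h) := by
  have h1 : Continuous fun (x : Fin n → ℝ) =>
      (fun i : Fin o => if hi : (i : ℕ) < n then x ⟨i, hi⟩ else 0) := by
    apply continuous_pi
    intro i
    by_cases hi : (i : ℕ) < n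
    · simp only [dif_pos hi]; exact continuous_apply _
    · simp only [dif_neg hi]; exact continuous_const
  exact ((PiLp.continuous_toLp 2 fun _ : Fin o => ℝ).comp h1).comp
    (PiLp.continuous_ofLp 2 fun _ : Fin n => ℝ)

lemma continuous_projE {n o : ℕ} (h : n ≤ o) : Continuous (projE h) := by
  have h1 : Continuous fun (z : Fin o → ℝ) => (fun j : Fin n => z (Fin.castLE h j)) := by
    apply continuous_pi
    intro j
    exact continuous_apply _
  exact ((PiLp.continuous_toLp 2 fun _ : Fin n => ℝ).comp h1).comp
    (PiLp.continuous_ofLp 2 fun _ : Fin o => ℝ)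

theorem hasMEP_of_unifUnivApprox {n o m : ℕ} (hno : n ≤ o) (hom : o ≤ m)
    (𝓡 : Set (Euc o → Euc m)) (𝓣 : Set (Euc m → Euc m))
    (h𝓡emb : ∀ R ∈ 𝓡, IsEmbOn R Set.univ Set.univ)
    (h𝓡univ : UnifUnivApprox 𝓡 {f : Euc o → Euc m | Continuous f})
    (h𝓣cont : ∀ T ∈ 𝓣, Continuous T)
    (hid : (id : Euc m → Euc m) ∈ 𝓣) :
    HasMEP (compFam 𝓣 𝓡) {f : Euc n → Euc m | IsEmbOn f Set.univ Set.univ} := by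
  intro K hKne hKc f hf ε hε
  obtain ⟨hfC, hfI, -, hfInv⟩ := hf
  have hfc : Continuous f := continuousOn_univ.1 hfC
  -- the extension g of f to ℝᵒ
  have hgc : Continuous (f ∘ projE hno) := hfc.comp (continuous_projE hno)
  set W : Set (Euc o) := inclE hno '' K with hWdef
  have hWc : IsCompact W := hKc.image (continuous_inclE hno)
  have hWne : W.Nonempty := hKne.image _
  obtain ⟨R, hR𝓡, hRapp⟩ := h𝓡univ (f ∘ projE hno) hgc W hWne hWc (ε / 2) (by linarith)
  obtain ⟨hRC, hRI, -, hRInv⟩ := h𝓡emb R hR𝓡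
  have hRc : Continuous R := continuousOn_univ.1 hRC
  refine ⟨id ∘ R, ⟨id, hid, R, hR𝓡, rfl⟩, W, hWc, ?_⟩
  -- left inverse facts
  have hfli : ∀ x : Euc n, Function.invFunOn f univ (f x) = x :=
    fun x => hfI.leftInvOn_invFunOn (mem_univ x)
  have hRli : ∀ z : Euc o, Function.invFunOn R univ (R z) = z :=
    fun z => hRI.leftInvOn_invFunOn (mem_univ z)
  -- the witness embedding
  set r : Euc m → Euc m := fun y => R (inclE hno (Function.invFunOn f univ y)) with hrdef
  have hrval : ∀ x : Euc n, r (f x) = R (inclE hno x) := by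
    intro x; simp only [hrdef, hfli]
  have himg : (id ∘ R) '' W = R '' W := by
    simp [Function.id_comp]
  have hrI : InjOn r (f '' K) := by
    rintro y1 ⟨x1, hx1, rfl⟩ y2 ⟨x2, hx2, rfl⟩ hr12
    rw [hrval, hrval] at hr12
    have h1 := hRI (mem_univ _) (mem_univ _) hr12
    rw [inclE_inj hno h1]
  have hrEmb : IsEmbOn r (f '' K) ((id ∘ R) '' W) := by
    refine ⟨?_, hrI, ?_, ?_⟩
    · have h1 : ContinuousOn (Function.invFunOn f univ) (f '' K) :=
        hfInv.mono (image_mono (subset_univ K))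
      exact (hRc.comp (continuous_inclE hno)).comp_continuousOn h1
    · rintro _ ⟨_, ⟨x, hx, rfl⟩, rfl⟩
      rw [himg, hrval]
      exact mem_image_of_mem R (mem_image_of_mem _ hx)
    · have hqc : ContinuousOn (fun y => f (projE hno (Function.invFunOn R univ y)))
          (r '' (f '' K)) := by
        have hsub : r '' (f '' K) ⊆ R '' univ := by
          rintro _ ⟨y, hy, rfl⟩
          exact ⟨_, mem_univ _, rfl⟩
        have h1 : ContinuousOn (Function.invFunOn R univ) (r '' (f '' K)) := hRInv.mono hsub
        exact (hfc.comp (continuous_projE hno)).comp_continuousOn h1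
      refine hqc.congr ?_
      rintro _ ⟨_, ⟨x, hx, rfl⟩, rfl⟩
      have hmem : f x ∈ f '' K := mem_image_of_mem f hx
      have einv : Function.invFunOn r (f '' K) (r (f x)) = f x :=
        hrI.leftInvOn_invFunOn hmem
      rw [einv, hrval]
      simp only [hRli, projE_inclE]
  have hle : embGap f (id ∘ R) K W ≤ ⨆ y ∈ f '' K, edist y (r y) := iInf₂_le r hrEmb
  have hsup : (⨆ y ∈ f '' K, edist y (r y)) ≤ ENNReal.ofReal (ε / 2) := by
    refine iSup₂_le ?_
    rintro _ ⟨x, hx, rfl⟩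
    rw [hrval]
    have hz : inclE hno x ∈ W := mem_image_of_mem _ hx
    have happ := hRapp _ hz
    have hfx : f x = (f ∘ projE hno) (inclE hno x) := by
      simp [Function.comp, projE_inclE]
    rw [edist_dist, dist_eq_norm, hfx]
    exact ENNReal.ofReal_le_ofReal happ.le
  calc embGap f (id ∘ R) K W ≤ ENNReal.ofReal (ε / 2) := hle.trans hsup
    _ < ENNReal.ofReal ε := (ENNReal.ofReal_lt_ofReal_iff hε).2 (by linarith)
end
end

section
/- Fix n ≥ 1, B ∈ GL_n(ℝ), a positive diagonal matrix D, and let W, Δ_y and M_y be as in the context. Then for every y ∈ ℝ^{2n}, the n×n matrix M_y W = (I − Δ_y − Δ_y D) B is invertible. -/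
open Matrix
open scoped NNReal

noncomputable section

/-- The squared ℓ² norm of a vector. -/
def l2sq {ι : Type*} [Fintype ι] (v : ι → ℝ) : ℝ := ∑ j, (v j) ^ 2

/-- The ℓ² norm of a vector. -/
def l2norm {ι : Type*} [Fintype ι] (v : ι → ℝ) : ℝ := Real.sqrt (l2sq v)

/-- The matrix `W = [B; -DB]` (`B` stacked on top of `-DB`). -/
def Wmat {n : ℕ} (B D : Matrix (Fin n) (Fin n) ℝ) : Matrix (Fin n ⊕ Fin n) (Fin n) ℝ :=
  Matrix.of (Sum.elim (fun i j => B i j) (fun i j => -((D * B) i j)))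

/-- The injective ReLU layer `R(x) = ReLU(Wx)`. -/
def Rrelu {n : ℕ} (B D : Matrix (Fin n) (Fin n) ℝ) (x : Fin n → ℝ) : (Fin n ⊕ Fin n) → ℝ :=
  fun j => max ((Wmat B D).mulVec x j) 0

/-- `c(y) = max([[I,-I],[-I,I]] y, 0)` componentwise. -/
def cvec {n : ℕ} (y : (Fin n ⊕ Fin n) → ℝ) : (Fin n ⊕ Fin n) → ℝ :=
  fun j => max ((Matrix.fromBlocks (1 : Matrix (Fin n) (Fin n) ℝ) (-1) (-1) 1).mulVec y j) 0

/-- The diagonal matrix `Δ_y` with `(Δ_y)_{ii} = 1` iff `c(y)_{i+n} > 0`. -/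
def Delta {n : ℕ} (y : (Fin n ⊕ Fin n) → ℝ) : Matrix (Fin n) (Fin n) ℝ :=
  Matrix.diagonal (fun i => if 0 < cvec y (Sum.inr i) then (1 : ℝ) else 0)

/-- The matrix `M_y = [(I - Δ_y), Δ_y]` (block concatenation of columns). -/
def Mmat {n : ℕ} (y : (Fin n ⊕ Fin n) → ℝ) : Matrix (Fin n) (Fin n ⊕ Fin n) ℝ :=
  Matrix.of (fun i => Sum.elim (fun j => (1 - Delta y) i j) (fun j => Delta y i j))

/-- The matrix `M̃_y = [Δ_y, (I - Δ_y)]` (block concatenation of columns). -/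
def Mtil {n : ℕ} (y : (Fin n ⊕ Fin n) → ℝ) : Matrix (Fin n) (Fin n ⊕ Fin n) ℝ :=
  Matrix.of (fun i => Sum.elim (fun j => Delta y i j) (fun j => (1 - Delta y) i j))

/-- The layer-wise projection `R†(y) = (M_y W)⁻¹ M_y y`. -/
def Rdag {n : ℕ} (B D : Matrix (Fin n) (Fin n) ℝ) (y : (Fin n ⊕ Fin n) → ℝ) : Fin n → ℝ :=
  (Mmat y * Wmat B D)⁻¹.mulVec ((Mmat y).mulVec y)

section DiagonalSelector

variable {K ι : Type*} [Field K] [Fintype ι] [DecidableEq ι]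

/-- `1 - P - P * D` is diagonal with entry `1`
where `P i i = 0` and `-D i i` where `P i i = 1`. -/
theorem isUnit_one_sub_sub_mul_of_isDiag {P D : Matrix ι ι K} (hP : P.IsDiag)
    (hP01 : ∀ i, P i i = 0 ∨ P i i = 1) (hD : D.IsDiag) (hD0 : ∀ i, D i i ≠ 0) :
    IsUnit (1 - P - P * D) := by
  rw [← hP.diagonal_diag, ← hD.diagonal_diag, diagonal_mul_diagonal, ← diagonal_one,
    diagonal_sub, diagonal_sub, isUnit_diagonal, Pi.isUnit_iff]
  intro i
  rcases hP01 i with h | h <;> simp [h, hD0 i]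

end DiagonalSelector

theorem Delta_apply_self_eq_zero_or_one {n : ℕ} (y : (Fin n ⊕ Fin n) → ℝ) (i : Fin n) :
    Delta y i i = 0 ∨ Delta y i i = 1 := by
  by_cases h : 0 < cvec y (Sum.inr i) <;> simp [Delta, h]

theorem Mmat_mul_Wmat {n : ℕ} (B D : Matrix (Fin n) (Fin n) ℝ) (y : (Fin n ⊕ Fin n) → ℝ) :
    Mmat y * Wmat B D = (1 - Delta y - Delta y * D) * B := by
  have hblocks : Mmat y * Wmat B D = (1 - Delta y) * B + Delta y * -(D * B) := by
    ext i j
    simp [Matrix.mul_apply, Mmat, Wmat, Fintype.sum_sum_type]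
  rw [hblocks]
  noncomm_ring

theorem mmat_mul_wmat_isUnit_general {n : ℕ}
    (B : Matrix (Fin n) (Fin n) ℝ) (hB : IsUnit B.det)
    (D : Matrix (Fin n) (Fin n) ℝ)
    (hDdiag : ∀ i j, i ≠ j → D i j = 0) (hDpos : ∀ i, 0 < D i i)
    (y : (Fin n ⊕ Fin n) → ℝ) :
    Mmat y * Wmat B D = (1 - Delta y - Delta y * D) * B ∧
      IsUnit (Mmat y * Wmat B D) := by
  have hmid : IsUnit (1 - Delta y - Delta y * D) :=
    isUnit_one_sub_sub_mul_of_isDiag (isDiag_diagonal _) (Delta_apply_self_eq_zero_or_one y)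
      hDdiag fun i => (hDpos i).ne'
  refine ⟨Mmat_mul_Wmat B D y, ?_⟩
  rw [Mmat_mul_Wmat]
  exact hmid.mul ((isUnit_iff_isUnit_det B).mpr hB)

theorem mmat_mul_wmat_isUnit {n : ℕ} (hn : 1 ≤ n)
    (B : Matrix (Fin n) (Fin n) ℝ) (hB : IsUnit B.det)
    (D : Matrix (Fin n) (Fin n) ℝ)
    (hDdiag : ∀ i j, i ≠ j → D i j = 0) (hDpos : ∀ i, 0 < D i i)
    (y : (Fin n ⊕ Fin n) → ℝ) :
    Mmat y * Wmat B D = (1 - Delta y - Delta y * D) * B ∧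
      IsUnit (Mmat y * Wmat B D) :=
  mmat_mul_wmat_isUnit_general B hB D hDdiag hDpos y
end
end
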